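/- Let X be a real Hausdorff locally convex space and C ⊆ X. The normal cone N_C is a maximal monotone operator if and only if C = {x ∈ X : φ_{N_C}(x, 0) ≤ 0}. -/

import Mathlib

open Set Classical

section Defs

variable {X : Type*} [AddCommGroup X] [Module ℝ X] [TopologicalSpace X]

/-- Graph of the normal cone `N_C` of a set `C`: `x* ∈ N_C(x)` iff `x ∈ C` and
`⟨y - x, x*⟩ ≤ 0` for all `y ∈ C`. -/
def normalConeGraph (C : Set X) : Set (X × (X →L[ℝ] ℝ)) :=
  {p | p.1 ∈ C ∧ ∀ y ∈ C, p.2 (y - p.1) ≤ 0}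

/-- The Fitzpatrick function of a multivalued operator given by its graph `G`:
`φ_T(x, x*) = sup {⟨x - a, a*⟩ + ⟨a, x*⟩ : (a, a*) ∈ G}`, with `sup ∅ = ⊥ = -∞`. -/
noncomputable def fitzpatrick (G : Set (X × (X →L[ℝ] ℝ))) (x : X) (x' : X →L[ℝ] ℝ) : EReal :=
  sSup ((fun p => ((p.2 (x - p.1) + x' p.1 : ℝ) : EReal)) '' G)

/-- Indicator function of a set, with values in `EReal`: `0` on `A`, `+∞` outside. -/
noncomputable def indicatorE (A : Set X) (x : X) : EReal := if x ∈ A then 0 else ⊤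

/-- Support function `σ_C(x*) = sup {⟨x, x*⟩ : x ∈ C}`, with `sup ∅ = ⊥ = -∞`. -/
noncomputable def supportFn (C : Set X) (x' : X →L[ℝ] ℝ) : EReal :=
  sSup ((fun x => ((x' x : ℝ) : EReal)) '' C)

/-- The portable hull `C#` of `C`: all `x` with `⟨x - a, a*⟩ ≤ 0` for every
`(a, a*)` in the graph of `N_C`. -/
def portableHull (C : Set X) : Set X :=
  {x | ∀ p ∈ normalConeGraph C, p.2 (x - p.1) ≤ 0}

/-- A graph `G ⊆ X × X*` is monotone. -/
def IsMonotoneGraph (G : Set (X × (X →L[ℝ] ℝ))) : Prop :=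
  ∀ p ∈ G, ∀ q ∈ G, 0 ≤ (p.2 - q.2) (p.1 - q.1)

/-- A graph is maximal monotone: nonempty, monotone, and maximal under inclusion
among monotone graphs. -/
def IsMaximalMonotone (G : Set (X × (X →L[ℝ] ℝ))) : Prop :=
  G.Nonempty ∧ IsMonotoneGraph G ∧ ∀ G', IsMonotoneGraph G' → G ⊆ G' → G' = G

end Defs

variable {X : Type*} [AddCommGroup X] [Module ℝ X] [TopologicalSpace X]
  [IsTopologicalAddGroup X] [ContinuousSMul ℝ X] [LocallyConvexSpace ℝ X] [T2Space X]

section Aux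

variable {X : Type*} [AddCommGroup X] [Module ℝ X] [TopologicalSpace X]

/-- `φ(x,0) ≤ 0` iff all the defining terms are nonpositive. -/
lemma fitz_zero_le_iff (C : Set X) (x : X) :
    fitzpatrick (normalConeGraph C) x 0 ≤ 0 ↔
      ∀ p ∈ normalConeGraph C, p.2 (x - p.1) ≤ 0 := by
  constructor
  · intro h p hp
    have hmem := le_sSup (Set.mem_image_of_mem
      (fun p => ((p.2 (x - p.1) + (0 : X →L[ℝ] ℝ) p.1 : ℝ) : EReal)) hp)
    have h2 : ((p.2 (x - p.1) + (0 : X →L[ℝ] ℝ) p.1 : ℝ) : EReal) ≤ 0 :=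
      hmem.trans h
    simp only [ContinuousLinearMap.zero_apply, add_zero] at h2
    exact_mod_cast h2
  · intro h
    apply sSup_le
    rintro v ⟨p, hp, rfl⟩
    have := h p hp
    simp only [ContinuousLinearMap.zero_apply, add_zero]
    exact_mod_cast this

lemma normalConeGraph_mono (C : Set X) : IsMonotoneGraph (normalConeGraph C) := by
  rintro ⟨a, a'⟩ ⟨haC, ha⟩ ⟨b, b'⟩ ⟨hbC, hb⟩
  have h1 : a' (b - a) ≤ 0 := ha b hbC
  have h2 : b' (a - b) ≤ 0 := hb a haC
  have e1 : a' (a - b) = - a' (b - a) := by rw [← map_neg, neg_sub]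
  simp only [ContinuousLinearMap.sub_apply]
  rw [e1]
  linarith

lemma normalConeGraph_smul (C : Set X) {a : X} {a' : X →L[ℝ] ℝ}
    (h : (a, a') ∈ normalConeGraph C) {t : ℝ} (ht : 0 ≤ t) :
    (a, t • a') ∈ normalConeGraph C := by
  refine ⟨h.1, fun y hy => ?_⟩
  simp only [ContinuousLinearMap.smul_apply, smul_eq_mul]
  exact mul_nonpos_of_nonneg_of_nonpos ht (h.2 y hy)

end Aux
/-- `N_C` is maximal monotone iff `C = {x : φ_{N_C}(x, 0) ≤ 0}`. -/
theorem normalCone_maximalMonotone_iff_fitzpatrick_zero (C : Set X) :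
    IsMaximalMonotone (normalConeGraph C) ↔
      C = {x : X | fitzpatrick (normalConeGraph C) x 0 ≤ 0} := by
  constructor
  · rintro ⟨hne, hmono, hmax⟩
    ext x
    simp only [Set.mem_setOf_eq, fitz_zero_le_iff]
    constructor
    · rintro hx ⟨a, a'⟩ ⟨haC, ha⟩
      exact ha x hx
    · intro hx
      -- extend the graph by (x, 0); maximality forces (x,0) ∈ graph, so x ∈ C
      have hmono' : IsMonotoneGraph (insert (x, (0 : X →L[ℝ] ℝ)) (normalConeGraph C)) := by
        rintro p hp q hq
        rcases hp with hp | hp <;> rcases hq with hq | hq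
        · simp [hp, hq]
        · subst hp
          have := hx q hq
          simp only [ContinuousLinearMap.sub_apply, ContinuousLinearMap.zero_apply]
          have e : q.2 (x - q.1) = - q.2 (q.1 - x) := by rw [← map_neg, neg_sub]
          rw [e] at this; linarith
        · subst hq
          have := hx p hp
          simp only [ContinuousLinearMap.sub_apply, ContinuousLinearMap.zero_apply]
          have e : p.2 (p.1 - x) = - p.2 (x - p.1) := by rw [← map_neg, neg_sub]
          rw [e]; linarith
        · exact hmono p hp q hq
      have heq := hmax _ hmono' (Set.subset_insert _ _)
      have : (x, (0 : X →L[ℝ] ℝ)) ∈ normalConeGraph C := heq ▸ Set.mem_insert _ _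
      exact this.1
  · intro hC
    -- C is nonempty
    have hCne : C.Nonempty := by
      by_contra h
      rw [Set.not_nonempty_iff_eq_empty] at h
      have hG : normalConeGraph C = ∅ := by
        ext p; simp [normalConeGraph, h]
      have h0 : (0 : X) ∈ {x : X | fitzpatrick (normalConeGraph C) x 0 ≤ 0} := by
        simp [fitzpatrick, hG]
      rw [← hC, h] at h0
      exact h0
    obtain ⟨c, hc⟩ := hCne
    refine ⟨⟨(c, 0), hc, fun y _ => by simp⟩, normalConeGraph_mono C, ?_⟩
    intro G' hG' hsub
    apply Set.Subset.antisymm _ hsub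
    rintro ⟨z, z'⟩ hz
    -- z is in the portable hull
    have hport : ∀ p ∈ normalConeGraph C, p.2 (z - p.1) ≤ 0 := by
      rintro ⟨a, a'⟩ ha
      by_contra hpos
      push_neg at hpos
      have key : ∀ t : ℝ, 0 ≤ t → t * a' (z - a) ≤ z' (z - a) := by
        intro t ht
        have hmem := hG' (z, z') hz (a, t • a') (hsub (normalConeGraph_smul C ha ht))
        simp only [ContinuousLinearMap.sub_apply, ContinuousLinearMap.smul_apply,
          smul_eq_mul] at hmem
        linarith
      have hM := key 1 zero_le_one
      rw [one_mul] at hM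
      have ht : 0 ≤ (z' (z - a) + 1) / a' (z - a) := div_nonneg (by linarith) hpos.le
      have h1 := key _ ht
      rw [div_mul_cancel₀ _ (ne_of_gt hpos)] at h1
      linarith
    have hzC : z ∈ C := by
      rw [hC]; exact (fitz_zero_le_iff C z).2 hport
    refine ⟨hzC, fun y hy => ?_⟩
    have hmem := hG' (z, z') hz (y, 0) (hsub ⟨hy, fun w _ => by simp⟩)
    simp only [ContinuousLinearMap.sub_apply, ContinuousLinearMap.zero_apply,
      sub_zero] at hmem
    have e : z' (y - z) = - z' (z - y) := by rw [← map_neg, neg_sub]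
    rw [e]; linarith
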